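/- For a real number α ≥ 0, define j_α : ℝ → ℝ by the convergent power series j_α(z) = Σ_{m=0}^{∞} (−1)^m (z/2)^{2m} / (m! · Γ(m + α + 1)) (so that j_α(z) = (z/2)^{−α} J_α(z), where J_α is the Bessel function of the first kind). Then for every z ∈ [0,1], j_α(z) ≥ 1/Γ(α+1) − z²/(4Γ(α+2)) ≥ (4α + 3)/(4Γ(α+2)). In particular min_{z ∈ [0,1]} j_α(z) ≥ (4α+3)/(4Γ(α+2)) > 0. -/
import Mathlib


/-- The normalized Bessel function `j_α(z) = (z/2)^{-α} J_α(z)`, given by its power series. -/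
noncomputable def besselJNorm (α : ℝ) (z : ℝ) : ℝ :=
  ∑' m : ℕ, (-1 : ℝ) ^ m * (z / 2) ^ (2 * m) / (m.factorial * Real.Gamma (m + α + 1))

theorem besselJNorm_lower_bound (α : ℝ) (hα : 0 ≤ α) :
    (∀ z ∈ Set.Icc (0 : ℝ) 1,
      1 / Real.Gamma (α + 1) - z ^ 2 / (4 * Real.Gamma (α + 2)) ≤ besselJNorm α z ∧
      (4 * α + 3) / (4 * Real.Gamma (α + 2)) ≤
        1 / Real.Gamma (α + 1) - z ^ 2 / (4 * Real.Gamma (α + 2))) ∧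
    0 < (4 * α + 3) / (4 * Real.Gamma (α + 2)) := by
  have hG2 : 0 < Real.Gamma (α + 2) := Real.Gamma_pos_of_pos (by linarith)
  have hG1 : 0 < Real.Gamma (α + 1) := Real.Gamma_pos_of_pos (by linarith)
  have hGm : ∀ m : ℕ, 0 < Real.Gamma ((m : ℝ) + α + 1) := fun m =>
    Real.Gamma_pos_of_pos (by positivity)
  have hGsucc : ∀ m : ℕ, Real.Gamma (((m : ℕ) + 1 : ℕ) + α + 1)
      = ((m : ℝ) + α + 1) * Real.Gamma ((m : ℝ) + α + 1) := by
    intro m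
    have h : (((m : ℕ) + 1 : ℕ) : ℝ) + α + 1 = ((m : ℝ) + α + 1) + 1 := by push_cast; ring
    rw [h, Real.Gamma_add_one (by positivity)]
  have hGmono : ∀ m : ℕ, Real.Gamma (α + 1) ≤ Real.Gamma ((m : ℝ) + α + 1) := by
    intro m
    induction m with
    | zero => simp
    | succ n ih =>
      calc Real.Gamma (α + 1) ≤ Real.Gamma ((n : ℝ) + α + 1) := ih
        _ ≤ ((n : ℝ) + α + 1) * Real.Gamma ((n : ℝ) + α + 1) := by
            nlinarith [hGm n, Nat.cast_nonneg (α := ℝ) n]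
        _ = Real.Gamma (((n : ℕ) + 1 : ℕ) + α + 1) := (hGsucc n).symm
  have hGgeone : ∀ m : ℕ, Real.Gamma (α + 1) ≤ (m.factorial : ℝ) * Real.Gamma ((m : ℝ) + α + 1) := by
    intro m
    calc Real.Gamma (α + 1) ≤ Real.Gamma ((m : ℝ) + α + 1) := hGmono m
      _ ≤ (m.factorial : ℝ) * Real.Gamma ((m : ℝ) + α + 1) := by
          nlinarith [hGm m, (by exact_mod_cast Nat.one_le_iff_ne_zero.mpr m.factorial_ne_zero :
            (1 : ℝ) ≤ (m.factorial : ℝ))]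
  constructor
  · rintro z ⟨hz0, hz1⟩
    set f : ℕ → ℝ := fun m =>
      (-1 : ℝ) ^ m * (z / 2) ^ (2 * m) / (m.factorial * Real.Gamma (m + α + 1)) with hf
    set a : ℕ → ℝ := fun m =>
      (z / 2) ^ (2 * m) / (m.factorial * Real.Gamma (m + α + 1)) with ha
    have ha_nonneg : ∀ m, 0 ≤ a m := by
      intro m
      have := hGm m
      have hz : 0 ≤ z / 2 := by linarith
      positivity
    have hpow : ∀ m : ℕ, (z / 2) ^ (2 * m) ≤ (1 / 4 : ℝ) ^ m := by
      intro m
      rw [pow_mul]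
      apply pow_le_pow_left₀ (by positivity)
      nlinarith
    have habs : ∀ m, |f m| ≤ (1 / Real.Gamma (α + 1)) * (1 / 4 : ℝ) ^ m := by
      intro m
      have h1 : |f m| = a m := by
        rw [hf, ha]
        simp only
        rw [abs_div, abs_mul, abs_mul, abs_pow, abs_pow, abs_neg, abs_one, one_pow, one_mul]
        rw [abs_of_nonneg (by positivity : (0:ℝ) ≤ z / 2),
          abs_of_nonneg (by positivity : (0:ℝ) ≤ (m.factorial : ℝ)),
          abs_of_nonneg (hGm m).le]
      rw [h1, ha]
      rw [div_le_iff₀ (by positivity)]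
      calc (z / 2) ^ (2 * m) ≤ (1/4:ℝ) ^ m := hpow m
        _ = (1 / Real.Gamma (α + 1) * (1/4:ℝ) ^ m) * Real.Gamma (α + 1) := by
            field_simp
        _ ≤ 1 / Real.Gamma (α + 1) * (1/4:ℝ) ^ m * ((m.factorial : ℝ) * Real.Gamma (m + α + 1)) := by
            apply mul_le_mul_of_nonneg_left (hGgeone m) (by positivity)
    have hsum : Summable f := by
      apply Summable.of_abs
      apply Summable.of_nonneg_of_le (fun m => abs_nonneg _) habs
      exact (summable_geometric_of_lt_one (by norm_num) (by norm_num)).mul_left _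
    -- step inequality: a (m+1) ≤ a m
    have hstep : ∀ m : ℕ, a (m + 1) ≤ a m := by
      intro m
      rw [ha]
      simp only
      rw [div_le_div_iff₀ (by have := hGm (m+1); positivity) (by have := hGm m; positivity)]
      have hfac : ((m + 1).factorial : ℝ) = ((m : ℝ) + 1) * (m.factorial : ℝ) := by
        push_cast [Nat.factorial_succ]; ring
      rw [hGsucc m, hfac]
      have hp : (z / 2) ^ (2 * (m + 1)) = (z / 2) ^ (2 * m) * (z / 2) ^ 2 := by ring
      rw [hp]
      have h1 : (z / 2) ^ 2 ≤ 1 := by nlinarith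
      have h2 : (0:ℝ) ≤ (z / 2) ^ (2 * m) := by positivity
      have h3 : (1:ℝ) ≤ (m.factorial : ℝ) := by
        exact_mod_cast Nat.one_le_iff_ne_zero.mpr m.factorial_ne_zero
      have h4 := hGm m
      have hfactor : (1:ℝ) ≤ ((m:ℝ) + 1) * ((m:ℝ) + α + 1) := by
        nlinarith [Nat.cast_nonneg (α := ℝ) m]
      calc (z / 2) ^ (2 * m) * (z / 2) ^ 2 * ((m.factorial : ℝ) * Real.Gamma ((m:ℝ) + α + 1))
          ≤ (z / 2) ^ (2 * m) * ((m.factorial : ℝ) * Real.Gamma ((m:ℝ) + α + 1)) := by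
            have hq : (z / 2) ^ (2 * m) * (z / 2) ^ 2 ≤ (z / 2) ^ (2 * m) := by
              nlinarith [mul_le_mul_of_nonneg_left h1 h2]
            exact mul_le_mul_of_nonneg_right hq (by positivity)
        _ ≤ (z / 2) ^ (2 * m) * ((m.factorial : ℝ) * Real.Gamma ((m:ℝ) + α + 1))
            * (((m:ℝ) + 1) * ((m:ℝ) + α + 1)) :=
            le_mul_of_one_le_right (by positivity) hfactor
        _ = (z / 2) ^ (2 * m) * (((m:ℝ) + 1) * (m.factorial : ℝ)
            * (((m:ℝ) + α + 1) * Real.Gamma ((m:ℝ) + α + 1))) := by ring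
    have hfa_even : ∀ k : ℕ, f (2 * k) = a (2 * k) := by
      intro k
      have h : ((-1 : ℝ)) ^ (2 * k) = 1 := Even.neg_one_pow ⟨k, by ring⟩
      simp only [hf, ha, h, one_mul]
    have hfa_odd : ∀ k : ℕ, f (2 * k + 1) = -a (2 * k + 1) := by
      intro k
      have h : ((-1 : ℝ)) ^ (2 * k + 1) = -1 := Odd.neg_one_pow ⟨k, by ring⟩
      simp only [hf, ha, h]
      ring
    -- tail nonneg
    have hsum2 : Summable (fun m => f (m + 2)) :=
      hsum.comp_injective (add_left_injective 2)
    have hT : 0 ≤ ∑' m, f (m + 2) := by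
      have he : Summable (fun k => f (2 * k + 2)) :=
        hsum.comp_injective (fun i j h => by omega)
      have ho : Summable (fun k => f (2 * k + 1 + 2)) :=
        hsum.comp_injective (fun i j h => by omega)
      have := tsum_even_add_odd (f := fun m => f (m + 2)) he ho
      rw [← this]
      have key : ∀ k : ℕ, 0 ≤ f (2 * k + 2) + f (2 * k + 1 + 2) := by
        intro k
        have h1 : f (2 * k + 2) = a (2 * (k + 1)) := by
          have : 2 * k + 2 = 2 * (k + 1) := by ring
          rw [this, hfa_even]
        have h2 : f (2 * k + 1 + 2) = -a (2 * (k + 1) + 1) := by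
          have : 2 * k + 1 + 2 = 2 * (k + 1) + 1 := by ring
          rw [this, hfa_odd]
        rw [h1, h2]
        have := hstep (2 * (k + 1))
        linarith
      have := Summable.tsum_add he ho
      rw [← this]
      exact tsum_nonneg (fun k => by linarith [key k])
    -- split off first two terms
    have hsplit : besselJNorm α z = f 0 + (f 1 + ∑' m, f (m + 2)) := by
      have hsum1 : Summable (fun b => f (b + 1)) :=
        hsum.comp_injective (add_left_injective 1)
      rw [besselJNorm, ← hf, Summable.tsum_eq_zero_add hsum, Summable.tsum_eq_zero_add hsum1]
    have hf0 : f 0 = 1 / Real.Gamma (α + 1) := by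
      rw [hf]; norm_num
    have hf1 : f 1 = -(z ^ 2 / (4 * Real.Gamma (α + 2))) := by
      have h : ((1 : ℕ) : ℝ) + α + 1 = α + 2 := by push_cast; ring
      simp only [hf]
      rw [h]
      simp only [Nat.factorial_one, Nat.cast_one, pow_one, one_mul, mul_one]
      ring
    constructor
    · rw [hsplit, hf0, hf1]; linarith
    · have hGrel : Real.Gamma (α + 2) = (α + 1) * Real.Gamma (α + 1) := by
        have h : α + 2 = (α + 1) + 1 := by ring
        rw [h, Real.Gamma_add_one (by positivity)]
      have hz2 : z ^ 2 ≤ 1 := by nlinarith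
      have key : (4 * α + 3) / (4 * Real.Gamma (α + 2)) + (1 - z ^ 2) / (4 * Real.Gamma (α + 2))
          = 1 / Real.Gamma (α + 1) - z ^ 2 / (4 * Real.Gamma (α + 2)) := by
        rw [hGrel]; field_simp; ring
      have hnn : 0 ≤ (1 - z ^ 2) / (4 * Real.Gamma (α + 2)) :=
        div_nonneg (by linarith) (by positivity)
      linarith
  · positivity
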